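/- Let μ ∈ ℝ, σ > 0 and α ∈ (0,1). Then inf over all probability measures in V(μ,σ) of the left-continuous Value-at-Risk VaR_α equals inf over V(μ,σ) of the right-continuous Value-at-Risk VaR⁺_α, and both equal μ − σ·√((1−α)/α). Moreover, the infimum of VaR_α is attained by the two-point distribution placing mass α at μ − σ√((1−α)/α) and mass 1−α at μ + σ√(α/(1−α)). -/

import Mathlib

open MeasureTheory Set

/-- The cumulative distribution function of a measure on ℝ. -/
noncomputable def cdf' (ν : Measure ℝ) (x : ℝ) : ℝ := (ν (Iic x)).toReal

/-- Left-continuous Value-at-Risk: `F⁻¹(α) = inf {x | F x ≥ α}`. -/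
noncomputable def VaR (ν : Measure ℝ) (α : ℝ) : ℝ := sInf {x : ℝ | α ≤ cdf' ν x}

/-- Right-continuous Value-at-Risk: `F⁻¹⁺(α) = sup {x | F x ≤ α}`. -/
noncomputable def VaRp (ν : Measure ℝ) (α : ℝ) : ℝ := sSup {x : ℝ | cdf' ν x ≤ α}

/-- `V(m,s)`: Borel probability measures on ℝ with mean `m` and variance `s²`. -/
def Vset (m s : ℝ) : Set (Measure ℝ) :=
  {ν | IsProbabilityMeasure ν ∧ (∫ x, x ∂ν) = m ∧ (∫ x, (x - m) ^ 2 ∂ν) = s ^ 2}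

/-- Symmetry of a measure about the point `m`. -/
def SymmAbout (ν : Measure ℝ) (m : ℝ) : Prop :=
  ∀ x : ℝ, ν (Iic x) = ν (Ici (2 * m - x))

/-- Unimodality: the cdf is convex on `(-∞, m)` and concave on `(m, ∞)` for some mode `m`. -/
def Unimodal (ν : Measure ℝ) : Prop :=
  ∃ m : ℝ, ConvexOn ℝ (Iio m) (cdf' ν) ∧ ConcaveOn ℝ (Ioi m) (cdf' ν)

/-- The uniform distribution on the interval `[a, b]`. -/
noncomputable def unif (a b : ℝ) : Measure ℝ :=
  (ENNReal.ofReal (b - a))⁻¹ • volume.restrict (Icc a b)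

/-!
Cantelli's one-sided inequality `P(X ≤ m - t) ≤ s² / (s² + t²)` shows that every law in `V(m, s)`
puts mass `< α` strictly below `m - s√((1-α)/α)`, which bounds both VaRs from below. The two-point
law with mass `β` at `m - s√((1-β)/β)` and `1-β` at `m + s√(β/(1-β))` lies in `V(m, s)`; for `β = α`
its `VaR_α` equals the bound, and as `β ↓ α` its `VaR⁺_α`, which is its lower atom, tends to it.
-/

open Filter ProbabilityTheory

section TwoPoint

noncomputable def twoPoint (β a b : ℝ) : Measure ℝ :=
  ENNReal.ofReal β • Measure.dirac a + ENNReal.ofReal (1 - β) • Measure.dirac b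

variable {β : ℝ} (a b : ℝ)

lemma isProbabilityMeasure_twoPoint (hβ : β ∈ Icc (0 : ℝ) 1) :
    IsProbabilityMeasure (twoPoint β a b) := by
  constructor
  simp only [twoPoint, Measure.add_apply, Measure.smul_apply, measure_univ, smul_eq_mul, mul_one]
  rw [← ENNReal.ofReal_add hβ.1 (sub_nonneg.2 hβ.2), add_sub_cancel, ENNReal.ofReal_one]

lemma integral_twoPoint (hβ : β ∈ Icc (0 : ℝ) 1) (f : ℝ → ℝ) :
    ∫ x, f x ∂twoPoint β a b = β * f a + (1 - β) * f b := by
  rw [twoPoint, integral_add_measure ((integrable_dirac enorm_lt_top).smul_measure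
      ENNReal.ofReal_ne_top) ((integrable_dirac enorm_lt_top).smul_measure ENNReal.ofReal_ne_top),
    integral_smul_measure, integral_smul_measure, integral_dirac, integral_dirac,
    ENNReal.toReal_ofReal hβ.1, ENNReal.toReal_ofReal (sub_nonneg.2 hβ.2), smul_eq_mul,
    smul_eq_mul]

lemma cdf'_twoPoint (hβ : β ∈ Icc (0 : ℝ) 1) (x : ℝ) :
    cdf' (twoPoint β a b) x = (if a ≤ x then β else 0) + (if b ≤ x then 1 - β else 0) := by
  rw [cdf', twoPoint, Measure.add_apply, Measure.smul_apply, Measure.smul_apply,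
    Measure.dirac_apply' _ measurableSet_Iic, Measure.dirac_apply' _ measurableSet_Iic]
  by_cases ha : a ≤ x <;> by_cases hb : b ≤ x <;>
    simp [ha, hb, ENNReal.toReal_add, ENNReal.toReal_ofReal hβ.1,
      ENNReal.toReal_ofReal (sub_nonneg.2 hβ.2)]

variable {a b}

lemma VaR_twoPoint (hab : a ≤ b) {α : ℝ} (hα : α ∈ Ioc 0 β) (hβ : β ≤ 1) :
    VaR (twoPoint β a b) α = a := by
  have hβ' : β ∈ Icc (0 : ℝ) 1 := ⟨hα.1.le.trans hα.2, hβ⟩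
  suffices {x | α ≤ cdf' (twoPoint β a b) x} = Ici a by rw [VaR, this, csInf_Ici]
  ext x
  rw [mem_ofPred_eq, cdf'_twoPoint a b hβ', mem_Ici]
  rcases lt_or_ge x a with hx | hx
  · simp [not_le.2 hx, not_le.2 (hx.trans_le hab), hα.1]
  · simp only [hx, if_true, iff_true]
    split_ifs <;> linarith [hα.2, hβ'.2]

lemma VaRp_twoPoint (hab : a ≤ b) {α : ℝ} (hα : α ∈ Ico 0 β) (hβ : β ≤ 1) :
    VaRp (twoPoint β a b) α = a := by
  have hβ' : β ∈ Icc (0 : ℝ) 1 := ⟨hα.1.trans hα.2.le, hβ⟩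
  suffices {x | cdf' (twoPoint β a b) x ≤ α} = Iio a by rw [VaRp, this, csSup_Iio]
  ext x
  rw [mem_ofPred_eq, cdf'_twoPoint a b hβ', mem_Iio]
  rcases lt_or_ge x a with hx | hx
  · simp [hx, not_le.2 hx, not_le.2 (hx.trans_le hab), hα.1]
  · simp only [hx, if_true, not_lt.2 hx, iff_false, not_le]
    split_ifs <;> linarith [hα.2, hβ'.2]

end TwoPoint

section Quantile

variable {ν : Measure ℝ} [IsProbabilityMeasure ν] {α a : ℝ}

lemma cdf'_eq_cdf : cdf' ν = cdf ν := funext fun x => (cdf_eq_real ν x).symm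

lemma le_VaR_of_cdf'_lt (hα : α < 1) (h : ∀ x < a, cdf' ν x < α) : a ≤ VaR ν α := by
  have hne : {x | α ≤ cdf' ν x}.Nonempty := by
    rw [cdf'_eq_cdf]
    exact ((tendsto_cdf_atTop ν).eventually (eventually_ge_nhds hα)).exists
  exact le_csInf hne fun x hx => not_lt.1 fun hxa => (h x hxa).not_ge hx

lemma le_VaRp_of_cdf'_le (hα : α < 1) (h : ∀ x < a, cdf' ν x ≤ α) : a ≤ VaRp ν α := by
  obtain ⟨x₀, hx₀⟩ : ∃ x₀, ∀ x ≥ x₀, α < cdf' ν x := by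
    rw [cdf'_eq_cdf]
    exact eventually_atTop.1 ((tendsto_cdf_atTop ν).eventually (eventually_gt_nhds hα))
  have hbdd : BddAbove {x | cdf' ν x ≤ α} :=
    ⟨x₀, fun x hx => not_lt.1 fun hlt => (hx₀ x hlt.le).not_ge hx⟩
  rw [← csSup_Iio (a := a)]
  exact csSup_le_csSup hbdd nonempty_Iio h

end Quantile

theorem cantelli {ν : Measure ℝ} [IsProbabilityMeasure ν] {m s : ℝ}
    (hint : Integrable (fun y => (y - m) ^ 2) ν) (hm : ∫ y, y ∂ν = m)
    (hv : ∫ y, (y - m) ^ 2 ∂ν = s ^ 2) {x : ℝ} (hx : x < m) :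
    ν.real (Iic x) ≤ s ^ 2 / (s ^ 2 + (m - x) ^ 2) := by
  have hint₁ : Integrable (fun y => y - m) ν :=
    ((memLp_two_iff_integrable_sq (by fun_prop)).2 hint).integrable one_le_two
  have hmean : ∫ y, (y - m) ∂ν = 0 := by
    have hint_id : Integrable (fun y => y) ν :=
      (hint₁.add (integrable_const m)).congr (ae_of_all _ fun y => sub_add_cancel y m)
    rw [integral_sub hint_id (integrable_const m), hm]
    simp
  set t := m - x
  have ht : 0 < t := sub_pos.2 hx
  -- Markov's inequality for `(y - m - u)²`, with the shift `u = s² / t` that optimizes the bound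
  set u := s ^ 2 / t with hu_def
  have hu : 0 ≤ u := by positivity
  set f : ℝ → ℝ := fun y => (y - m) ^ 2 - 2 * u * (y - m) + u ^ 2
  have hint₂ : Integrable (fun y => (y - m) ^ 2 - 2 * u * (y - m)) ν :=
    hint.sub (hint₁.const_mul _)
  have hf_int : Integrable f ν := hint₂.add (integrable_const _)
  have hf : ∫ y, f y ∂ν = s ^ 2 + u ^ 2 := by
    rw [integral_add hint₂ (integrable_const _),
      integral_sub hint (hint₁.const_mul _), integral_const_mul, hv, hmean]
    simp
  have hsub : Iic x ⊆ {y | (t + u) ^ 2 ≤ f y} := fun y (hy : y ≤ x) => by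
    change (t + u) ^ 2 ≤ (y - m) ^ 2 - 2 * u * (y - m) + u ^ 2
    nlinarith
  have hmarkov := mul_meas_ge_le_integral_of_nonneg
    (ae_of_all _ fun y => show 0 ≤ f y by nlinarith [sq_nonneg (y - m - u)]) hf_int ((t + u) ^ 2)
  rw [hf] at hmarkov
  calc ν.real (Iic x) ≤ ν.real {y | (t + u) ^ 2 ≤ f y} := measureReal_mono hsub
    _ ≤ (s ^ 2 + u ^ 2) / (t + u) ^ 2 := by rw [le_div_iff₀ (by positivity)]; linarith
    _ = s ^ 2 / (s ^ 2 + t ^ 2) := by rw [hu_def]; field_simp; ring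

lemma cdf'_lt_of_mem_Vset {ν : Measure ℝ} {m s α : ℝ} (hs : 0 < s) (hα : α ∈ Ioo (0 : ℝ) 1)
    (hν : ν ∈ Vset m s) {x : ℝ} (hx : x < m - s * √((1 - α) / α)) : cdf' ν x < α := by
  obtain ⟨hprob, hm, hv⟩ := hν
  have hint : Integrable (fun y => (y - m) ^ 2) ν :=
    Integrable.of_integral_ne_zero (hv ▸ pow_ne_zero 2 hs.ne')
  have hr : 0 ≤ s * √((1 - α) / α) := by positivity
  have hxm : x < m := by linarith
  have hsq : s ^ 2 * ((1 - α) / α) < (m - x) ^ 2 := by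
    rw [← Real.sq_sqrt (div_nonneg (sub_nonneg.2 hα.2.le) hα.1.le), ← mul_pow]
    exact pow_lt_pow_left₀ (by linarith) hr two_ne_zero
  calc cdf' ν x = ν.real (Iic x) := rfl
    _ ≤ s ^ 2 / (s ^ 2 + (m - x) ^ 2) := cantelli hint hm hv hxm
    _ < α := by
      rw [div_lt_iff₀ (by positivity)]
      rw [mul_div_assoc', div_lt_iff₀ hα.1] at hsq
      nlinarith

noncomputable def cantelliExtremal (m s β : ℝ) : Measure ℝ :=
  twoPoint β (m - s * √((1 - β) / β)) (m + s * √(β / (1 - β)))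

section CantelliExtremal

variable {m s β : ℝ}

lemma cantelliExtremal_mem_Vset (hβ : β ∈ Ioo (0 : ℝ) 1) : cantelliExtremal m s β ∈ Vset m s := by
  obtain ⟨hβ0, hβ1⟩ := hβ
  have hβ' : β ∈ Icc (0 : ℝ) 1 := ⟨hβ0.le, hβ1.le⟩
  have hp : β * √((1 - β) / β) ^ 2 = 1 - β := by
    rw [Real.sq_sqrt (by positivity)]; field_simp
  have hq : (1 - β) * √(β / (1 - β)) ^ 2 = β := by
    rw [Real.sq_sqrt (by positivity)]; field_simp
  have hpq : √((1 - β) / β) * √(β / (1 - β)) = 1 := by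
    rw [← Real.sqrt_mul (by positivity), div_mul_div_comm, mul_comm (1 - β),
      div_self (by positivity), Real.sqrt_one]
  refine ⟨isProbabilityMeasure_twoPoint _ _ hβ', ?_, ?_⟩
  · rw [cantelliExtremal, integral_twoPoint _ _ hβ']
    linear_combination (-s * √(β / (1 - β))) * hp + (s * β * √((1 - β) / β)) * hpq
  · rw [cantelliExtremal, integral_twoPoint _ _ hβ']
    linear_combination s ^ 2 * hp + s ^ 2 * hq

lemma sub_mul_sqrt_le_add_mul_sqrt (hs : 0 ≤ s) (p q : ℝ) : m - s * √p ≤ m + s * √q := by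
  have := mul_nonneg hs (Real.sqrt_nonneg p)
  have := mul_nonneg hs (Real.sqrt_nonneg q)
  linarith

lemma VaR_cantelliExtremal (hs : 0 ≤ s) (hβ : β < 1) {α : ℝ} (hα : α ∈ Ioc 0 β) :
    VaR (cantelliExtremal m s β) α = m - s * √((1 - β) / β) :=
  VaR_twoPoint (sub_mul_sqrt_le_add_mul_sqrt hs _ _) hα hβ.le

lemma VaRp_cantelliExtremal (hs : 0 ≤ s) (hβ : β < 1) {α : ℝ} (hα : α ∈ Ico 0 β) :
    VaRp (cantelliExtremal m s β) α = m - s * √((1 - β) / β) :=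
  VaRp_twoPoint (sub_mul_sqrt_le_add_mul_sqrt hs _ _) hα hβ.le

end CantelliExtremal

/-- Best-case VaR under mean–variance information (Proposition 3.1(ii)). -/
theorem best_case_VaR (m s α : ℝ) (hs : 0 < s) (hα : α ∈ Ioo (0:ℝ) 1) :
    sInf ((fun ν => VaR ν α) '' Vset m s) = m - s * Real.sqrt ((1 - α) / α) ∧
    sInf ((fun ν => VaRp ν α) '' Vset m s) = m - s * Real.sqrt ((1 - α) / α) ∧
    ((ENNReal.ofReal α • Measure.dirac (m - s * Real.sqrt ((1 - α) / α)) +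
        ENNReal.ofReal (1 - α) • Measure.dirac (m + s * Real.sqrt (α / (1 - α)))) ∈ Vset m s ∧
      VaR (ENNReal.ofReal α • Measure.dirac (m - s * Real.sqrt ((1 - α) / α)) +
        ENNReal.ofReal (1 - α) • Measure.dirac (m + s * Real.sqrt (α / (1 - α)))) α
        = m - s * Real.sqrt ((1 - α) / α)) := by
  obtain ⟨hα0, hα1⟩ := hα
  have hmem : cantelliExtremal m s α ∈ Vset m s := cantelliExtremal_mem_Vset ⟨hα0, hα1⟩
  have hVaR : VaR (cantelliExtremal m s α) α = m - s * √((1 - α) / α) :=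
    VaR_cantelliExtremal hs.le hα1 ⟨hα0, le_rfl⟩
  have hcdf : ∀ ν ∈ Vset m s, ∀ x < m - s * √((1 - α) / α), cdf' ν x < α :=
    fun ν hν x hx => cdf'_lt_of_mem_Vset hs ⟨hα0, hα1⟩ hν hx
  refine ⟨?_, ?_, hmem, hVaR⟩
  · refine IsLeast.csInf_eq ⟨⟨_, hmem, hVaR⟩, ?_⟩
    rintro _ ⟨ν, hν, rfl⟩
    have := hν.1
    exact le_VaR_of_cdf'_lt hα1 (hcdf ν hν)
  · refine IsGLB.csInf_eq ⟨?_, fun b hb => ?_⟩ ⟨_, mem_image_of_mem _ hmem⟩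
    · rintro _ ⟨ν, hν, rfl⟩
      have := hν.1
      exact le_VaRp_of_cdf'_le hα1 fun x hx => (hcdf ν hν x hx).le
    have hcont : ContinuousAt (fun β => m - s * √((1 - β) / β)) α := by
      fun_prop (disch := exact hα0.ne')
    refine ge_of_tendsto (hcont.tendsto.mono_left (nhdsWithin_le_nhds (s := Ioi α))) ?_
    filter_upwards [Ioo_mem_nhdsGT hα1] with β hβ
    exact hb ⟨_, cantelliExtremal_mem_Vset ⟨hα0.trans hβ.1, hβ.2⟩,
      VaRp_cantelliExtremal hs.le hβ.2 ⟨hα0.le, hβ.1⟩⟩
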